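/- arXiv:1307.4305 — 3 statements merged into one kernel-verified Lean document; each statement's English description precedes it below -/
import Mathlib

section
/- In the universal enveloping algebra of sl₂ over ℚ, with standard generators e, f, h, for all nonnegative integers k, l the identity e^{(l)} f^{(k)} = Σ_{m=0}^{min(k,l)} f^{(k−m)} · binom(h − k − l + 2m, m) · e^{(l−m)} holds, where x^{(n)} = x^n/n! and binom(h,m) = h(h−1)⋯(h−m+1)/m!. -/
/-!
Induction on `l`. Multiplying the identity for `l` on the left by `e`, each term
`f^{(k-m)} binom(h - c, m) e^{(l-m)}` splits in two: `e` moves past `f^{(k-m)}` at the cost of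
`f^{(k-m-1)} (h - (k-m-1))`, past the binomial element by shifting `h` by `2`, and is absorbed into
`e^{(l-m)}`. Pascal's rule `(n+m+1) binom(x,m+1) = n binom(x-1,m+1) + (x+n) binom(x-1,m)`
recombines the two families of terms into `(l+1)` times the right-hand side for `l+1`.
-/

/-- The divided power `x^(n) = x^n / n!` in a `ℚ`-algebra. -/
noncomputable def dividedPower {A : Type} [Ring A] [Algebra ℚ A] (x : A) (n : ℕ) : A :=
  ((n.factorial : ℚ))⁻¹ • x ^ n

/-- The binomial element `binom(x, m) = x (x-1) ⋯ (x-m+1) / m!` in a `ℚ`-algebra. -/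
noncomputable def binomElt {A : Type} [Ring A] [Algebra ℚ A] (x : A) (m : ℕ) : A :=
  ((m.factorial : ℚ))⁻¹ • ((List.range m).map (fun j => x - (j : ℚ) • (1 : A))).prod

section

variable {A : Type} [Ring A] [Algebra ℚ A]

@[simp]
lemma binomElt_zero (x : A) : binomElt x 0 = 1 := by simp [binomElt]

lemma binomElt_succ (x : A) (m : ℕ) :
    binomElt x (m + 1) = ((m : ℚ) + 1)⁻¹ • (binomElt x m * (x - (m : ℚ) • 1)) := by
  simp only [binomElt, Nat.factorial_succ, mul_comm, Nat.cast_mul, Nat.cast_add, Nat.cast_one,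
    mul_inv_rev, List.range_succ, List.pure_def, List.bind_eq_flatMap, List.flatMap_append,
    List.flatMap_cons, List.flatMap_nil, List.append_nil, List.map_append, List.map_cons,
    List.map_nil, List.prod_append, List.prod_cons, List.prod_nil, mul_one, smul_mul_assoc,
    smul_smul]

lemma smul_binomElt_succ (x : A) (m : ℕ) :
    ((m : ℚ) + 1) • binomElt x (m + 1) = binomElt x m * (x - (m : ℚ) • 1) := by
  rw [binomElt_succ, smul_inv_smul₀ (by positivity)]

lemma smul_binomElt_succ' (x : A) (m : ℕ) :
    ((m : ℚ) + 1) • binomElt x (m + 1) = x * binomElt (x - 1) m := by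
  induction m with
  | zero => simp [binomElt_succ]
  | succ m ih =>
    refine smul_right_injective A (show (m : ℚ) + 1 ≠ 0 by positivity) ?_
    calc ((m : ℚ) + 1) • (((m + 1 : ℕ) : ℚ) + 1) • binomElt x (m + 1 + 1)
        = ((m : ℚ) + 1) • binomElt x (m + 1) * (x - ((m + 1 : ℕ) : ℚ) • 1) := by
          rw [smul_binomElt_succ, smul_mul_assoc]
      _ = x * (binomElt (x - 1) m * ((x - 1) - (m : ℚ) • 1)) := by
          rw [ih, mul_assoc]
          congr 2
          push_cast
          module
      _ = ((m : ℚ) + 1) • (x * binomElt (x - 1) (m + 1)) := by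
          rw [← smul_binomElt_succ, mul_smul_comm]

lemma SemiconjBy.binomElt {a x y : A} (hxy : SemiconjBy a x y) (m : ℕ) :
    SemiconjBy a (binomElt x m) (binomElt y m) := by
  induction m with
  | zero => simp
  | succ m ih =>
    rw [binomElt_succ, binomElt_succ]
    exact (ih.mul_right (hxy.sub_right ((Commute.one_right a).smul_right _))).smul_right _

lemma binomElt_pascal (x : A) (n : ℚ) (m : ℕ) :
    (n + m + 1) • binomElt x (m + 1) =
      n • binomElt (x - 1) (m + 1) + (x + n • 1) * binomElt (x - 1) m := by
  have hx : Commute x (binomElt (x - 1) m) :=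
    ((Commute.refl x).sub_right (Commute.one_right x)).binomElt m
  refine smul_right_injective A (show (m : ℚ) + 1 ≠ 0 by positivity) ?_
  dsimp only
  rw [smul_comm, smul_binomElt_succ', smul_add, smul_comm _ n, smul_binomElt_succ, mul_sub,
    mul_sub, ← hx.eq]
  simp only [add_mul, mul_smul_comm, smul_mul_assoc, mul_one, one_mul]
  module

@[simp]
lemma dividedPower_zero (x : A) : dividedPower x 0 = 1 := by simp [dividedPower]

lemma mul_dividedPower (x : A) (n : ℕ) :
    x * dividedPower x n = ((n : ℚ) + 1) • dividedPower x (n + 1) := by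
  simp only [dividedPower, mul_smul_comm, smul_smul, ← pow_succ', Nat.factorial_succ,
    Nat.cast_mul, Nat.cast_succ, mul_inv]
  rw [mul_inv_cancel_left₀ (by positivity)]

end

theorem Finset.sum_range_min_eq_sum_range_min_succ {M : Type*} [AddCommMonoid M] {k l : ℕ}
    {T T' U V : ℕ → M} (hT : ∀ m ≤ l, T m = U m + if m < k then V m else 0)
    (hT'₀ : T' 0 = U 0) (hT' : ∀ m, T' (m + 1) = U (m + 1) + V m) (hU : U (l + 1) = 0) :
    ∑ m ∈ range (min k l + 1), T m = ∑ m ∈ range (min k (l + 1) + 1), T' m := by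
  have hUsum : ∑ m ∈ range (min k l + 1), U m = ∑ m ∈ range (min k (l + 1) + 1), U m := by
    rcases le_or_gt k l with hkl | hlk
    · rw [min_eq_left hkl, min_eq_left (by omega)]
    · rw [min_eq_right hlk.le, min_eq_right (by omega : l + 1 ≤ k), sum_range_succ _ (l + 1), hU,
        add_zero]
  have hVsum : ∑ m ∈ range (min k l + 1), (if m < k then V m else 0) =
      ∑ m ∈ range (min k (l + 1)), V m := by
    rw [← sum_filter]
    congr 1
    ext m
    simp only [mem_filter, mem_range]
    omega
  rw [sum_congr rfl fun m hm => hT m (by rw [mem_range] at hm; omega), sum_add_distrib, hUsum,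
    hVsum, sum_range_succ' T', hT'₀]
  simp only [hT', sum_add_distrib]
  rw [sum_range_succ' U]
  abel

section sl2

variable {A : Type} [Ring A] [Algebra ℚ A] {e f h : A}

lemma semiconjBy_e_h_sub (hhe : h * e - e * h = (2 : ℚ) • e) (c : ℚ) :
    SemiconjBy e (h - c • 1) (h - (c + 2) • 1) := by
  have : h * e = e * h + (2 : ℚ) • e := by rw [← hhe]; abel
  simp only [SemiconjBy, mul_sub, sub_mul, mul_smul_comm, smul_mul_assoc, mul_one, one_mul, this]
  module

lemma e_mul_f_pow_succ (hhf : h * f - f * h = (-2 : ℚ) • f) (hef : e * f - f * e = h) (j : ℕ) :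
    e * f ^ (j + 1) = f ^ (j + 1) * e + ((j : ℚ) + 1) • (f ^ j * (h - (j : ℚ) • 1)) := by
  have hef' : e * f = f * e + h := by rw [← hef]; abel
  have hhf' : h * f = f * h + (-2 : ℚ) • f := by rw [← hhf]; abel
  induction j with
  | zero => simp [hef']
  | succ j ih =>
    calc e * f ^ (j + 1 + 1)
        = f ^ (j + 1) * (e * f) + ((j : ℚ) + 1) • (f ^ j * (h * f - (j : ℚ) • f)) := by
          rw [pow_succ _ (j + 1), ← mul_assoc, ih]
          simp only [add_mul, mul_assoc, smul_mul_assoc, sub_mul, one_mul]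
      _ = f ^ (j + 1 + 1) * e +
            (((j + 1 : ℕ) : ℚ) + 1) • (f ^ (j + 1) * (h - ((j + 1 : ℕ) : ℚ) • 1)) := by
          rw [hef', hhf']
          simp only [mul_add, mul_sub, ← mul_assoc, ← pow_succ, mul_smul_comm, mul_one]
          push_cast
          module

lemma e_mul_dividedPower_succ (hhf : h * f - f * h = (-2 : ℚ) • f) (hef : e * f - f * e = h)
    (j : ℕ) :
    e * dividedPower f (j + 1) =
      dividedPower f (j + 1) * e + dividedPower f j * (h - (j : ℚ) • 1) := by
  simp only [dividedPower, mul_smul_comm, e_mul_f_pow_succ hhf hef, smul_add, smul_smul,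
    smul_mul_assoc, Nat.factorial_succ, Nat.cast_mul, Nat.cast_succ, mul_inv]
  rw [mul_right_comm, inv_mul_cancel₀ (by positivity), one_mul]

lemma e_mul_dividedPower_sub (hhf : h * f - f * h = (-2 : ℚ) • f) (hef : e * f - f * e = h)
    (k m : ℕ) :
    e * dividedPower f (k - m) = dividedPower f (k - m) * e +
      if m < k then dividedPower f (k - (m + 1)) * (h - ((k : ℚ) - 1 - m) • 1) else 0 := by
  split_ifs with hmk
  · obtain ⟨j, hj⟩ : ∃ j, k - m = j + 1 := ⟨k - (m + 1), by omega⟩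
    have hj' : ((k : ℚ) - 1 - m) = j := by
      rw [show j = k - (m + 1) by omega, Nat.cast_sub (by omega)]
      push_cast
      ring
    rw [hj, e_mul_dividedPower_succ hhf hef, show k - (m + 1) = j by omega, hj']
  · rw [Nat.sub_eq_zero_of_le (not_lt.mp hmk)]
    simp

lemma e_mul_term (hhe : h * e - e * h = (2 : ℚ) • e) (hhf : h * f - f * h = (-2 : ℚ) • f)
    (hef : e * f - f * e = h) {k l m : ℕ} (hm : m ≤ l) :
    e * (dividedPower f (k - m) * binomElt (h - (((k : ℚ) + l - 2 * m) • (1 : A))) m *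
        dividedPower e (l - m)) =
      ((l : ℚ) + 1 - m) • (dividedPower f (k - m) *
          binomElt (h - (((k : ℚ) + l + 2 - 2 * m) • (1 : A))) m * dividedPower e (l + 1 - m)) +
        if m < k then
          dividedPower f (k - (m + 1)) * ((h - (((k : ℚ) - 1 - m) • (1 : A))) *
            binomElt (h - (((k : ℚ) + l - 2 * m) • (1 : A))) m) * dividedPower e (l - m)
        else 0 := by
  have hB : e * binomElt (h - (((k : ℚ) + l - 2 * m) • (1 : A))) m =
      binomElt (h - (((k : ℚ) + l + 2 - 2 * m) • (1 : A))) m * e := by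
    have := (semiconjBy_e_h_sub hhe ((k : ℚ) + l - 2 * m)).binomElt m
    rwa [show (k : ℚ) + l - 2 * m + 2 = k + l + 2 - 2 * m by ring] at this
  have hE : e * dividedPower e (l - m) = ((l : ℚ) + 1 - m) • dividedPower e (l + 1 - m) := by
    rw [mul_dividedPower, Nat.sub_add_comm hm, Nat.cast_sub hm]
    ring_nf
  rw [← mul_assoc, ← mul_assoc, e_mul_dividedPower_sub hhf hef, add_mul, add_mul, mul_assoc _ e,
    hB]
  split_ifs <;> simp only [mul_assoc, hE, mul_smul_comm, add_zero, zero_mul]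

lemma smul_term_succ (k l m : ℕ) :
    ((l : ℚ) + 1) • (dividedPower f (k - (m + 1)) *
        binomElt (h - (((k : ℚ) + ((l + 1 : ℕ) : ℚ) - 2 * ((m + 1 : ℕ) : ℚ)) • (1 : A))) (m + 1) *
        dividedPower e (l + 1 - (m + 1))) =
      ((l : ℚ) + 1 - ((m + 1 : ℕ) : ℚ)) • (dividedPower f (k - (m + 1)) *
          binomElt (h - (((k : ℚ) + l + 2 - 2 * ((m + 1 : ℕ) : ℚ)) • (1 : A))) (m + 1) *
          dividedPower e (l + 1 - (m + 1))) +
        dividedPower f (k - (m + 1)) * ((h - (((k : ℚ) - 1 - m) • (1 : A))) *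
          binomElt (h - (((k : ℚ) + l - 2 * m) • (1 : A))) m) * dividedPower e (l - m) := by
  set x := h - (((k : ℚ) + l - 1 - 2 * m) • (1 : A))
  have hpascal := binomElt_pascal x ((l : ℚ) - m) m
  rw [show (l : ℚ) - m + m + 1 = l + 1 by ring] at hpascal
  have h₁ : h - (((k : ℚ) + ((l + 1 : ℕ) : ℚ) - 2 * ((m + 1 : ℕ) : ℚ)) • (1 : A)) = x := by
    push_cast; module
  have h₂ : h - (((k : ℚ) + l + 2 - 2 * ((m + 1 : ℕ) : ℚ)) • (1 : A)) = x - 1 := by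
    push_cast; module
  have h₃ : h - (((k : ℚ) + l - 2 * m) • (1 : A)) = x - 1 := by module
  have h₄ : h - (((k : ℚ) - 1 - m) • (1 : A)) = x + ((l : ℚ) - m) • 1 := by module
  rw [h₁, h₂, h₃, h₄, Nat.add_sub_add_right, ← smul_mul_assoc, ← mul_smul_comm, hpascal,
    ← smul_mul_assoc, ← mul_smul_comm]
  push_cast
  rw [show (l : ℚ) + 1 - (m + 1) = l - m by ring]
  simp only [mul_add, add_mul, mul_assoc]

end sl2

/-- In the universal enveloping algebra of `sl₂` over `ℚ` (equivalently, in any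
`ℚ`-algebra with elements `e, f, h` satisfying the `sl₂` relations, since the identity is a
consequence of the relations), for all `k, l ∈ ℕ`,
`e^{(l)} f^{(k)} = Σ_{m=0}^{min(k,l)} f^{(k−m)} · binom(h − (k+l−2m)·1, m) · e^{(l−m)}`. -/
theorem sl2_divided_power_commutation
    {A : Type} [Ring A] [Algebra ℚ A]
    (e f h : A)
    (hhe : h * e - e * h = (2 : ℚ) • e)
    (hhf : h * f - f * h = (-2 : ℚ) • f)
    (hef : e * f - f * e = h)
    (k l : ℕ) :
    dividedPower e l * dividedPower f k =
      ∑ m ∈ Finset.range (min k l + 1),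
        dividedPower f (k - m) *
          binomElt (h - (((k : ℚ) + (l : ℚ) - 2 * (m : ℚ)) • (1 : A))) m *
          dividedPower e (l - m) := by
  induction l with
  | zero => simp
  | succ l ih =>
    refine smul_right_injective A (show (l : ℚ) + 1 ≠ 0 by positivity) ?_
    dsimp only
    rw [← smul_mul_assoc, ← mul_dividedPower, mul_assoc, ih, Finset.mul_sum, Finset.smul_sum]
    exact Finset.sum_range_min_eq_sum_range_min_succ (fun m hm => e_mul_term hhe hhf hef hm)
      (by simp) (smul_term_succ k l) (by simp)
end

section
/- Let λ be a dominant weight of a simple Lie algebra g with short-root subalgebra data as follows: let I_sh ⊆ I be the set of indices of short simple roots, let λ̄ denote the restriction of λ to the span of {h_i : i ∈ I_sh}, and let i_sh be the linear section with i_sh(ᾱ)=α for short simple roots α. Define η_λ(μ) = i_sh(μ) + λ − i_sh(λ̄). If μ is a dominant weight of g_sh with μ ≤ λ̄ (i.e. λ̄ − μ is a nonnegative integer combination of restricted short simple roots), then η_λ(μ) is a dominant weight of g. -/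
/-!
For `j ∈ I_sh` the claim is the dominance of `μ` for `g_sh`. For `j ∉ I_sh` the coefficient of
`α_j` in `λ - η_λ(μ)` vanishes, so only off-diagonal Cartan entries `⟨α_i, h_j⟩ ≤ 0` enter and
subtracting `Σ m_i α_i` can only increase `⟨λ, h_j⟩ ≥ 0`.
-/

section

variable {ι R M : Type*} [Fintype ι] [CommSemiring R] [PartialOrder R] [IsOrderedRing R]
  [AddCommMonoid M] [Module R M]

theorem LinearMap.map_sum_smul_nonpos_of_apply_ne_nonpos (v : ι → M) (f : ι → M →ₗ[R] R)
    (hoff : ∀ i j, i ≠ j → f j (v i) ≤ 0) (c : ι → R) (hc : ∀ i, 0 ≤ c i) {j : ι}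
    (hcj : c j = 0) : f j (∑ i, c i • v i) ≤ 0 := by
  rw [map_sum]
  refine Finset.sum_nonpos fun i _ => ?_
  rw [map_smul, smul_eq_mul]
  by_cases hij : i = j
  · simp [hij, hcj]
  · exact mul_nonpos_of_nonneg_of_nonpos (hc i) (hoff i j hij)

end

/-- `μ = λ̄ − Σ_{i ∈ I_sh} m_i ᾱ_i` is encoded by `m` supported on `Ish`, and then
`η_λ(μ) = λ − Σ_i m_i α_i`; the dominance of `μ` for `g_sh` is the pairing condition at `j ∈ Ish`. -/
theorem eta_lambda_dominant_general
    {I : Type} [Fintype I]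
    {V : Type} [AddCommGroup V] [Module ℝ V]
    (α : I → V)                                -- simple roots
    (p : I → V →ₗ[ℝ] ℝ)                        -- evaluation at simple coroots h_j
    (hcartan : ∀ i j : I, i ≠ j → p j (α i) ≤ 0)
    (Ish : Set I)                               -- indices of short simple roots
    (lam : V)                                   -- the dominant weight λ
    (hlam : ∀ j : I, 0 ≤ p j lam)
    (m : I → ℕ) (hm : ∀ i : I, i ∉ Ish → m i = 0)   -- μ = λ̄ − Σ_{i∈I_sh} m_i ᾱ_i ≤ λ̄
    (hμdom : ∀ j ∈ Ish, 0 ≤ p j (lam - ∑ i : I, (m i : ℝ) • α i)) :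
    ∀ j : I, 0 ≤ p j (lam - ∑ i : I, (m i : ℝ) • α i) := by
  intro j
  by_cases hj : j ∈ Ish
  · exact hμdom j hj
  · have hsum := LinearMap.map_sum_smul_nonpos_of_apply_ne_nonpos α p hcartan
      (fun i => (m i : ℝ)) (fun i => Nat.cast_nonneg _) (j := j) (by simp [hm j hj])
    rw [map_sub]
    linarith [hlam j]

/-- Let `λ` be a dominant weight of a simple Lie algebra `g`, `I_sh` the
set of indices of short simple roots, and `η_λ(μ) = i_sh(μ) + λ − i_sh(λ̄)`.  If `μ` is a
dominant weight of `g_sh` with `μ ≤ λ̄`, then `η_λ(μ)` is a dominant weight of `g`.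

Encoding: the weight space is a real vector space `V` with simple roots `α i` and coroot
evaluation functionals `p j`; the Cartan matrix condition `p j (α i) ≤ 0` for `i ≠ j` holds.
Writing `μ = λ̄ − Σ_{i ∈ I_sh} m_i ᾱ_i` (so `m` is supported on `I_sh`), one has
`η_λ(μ) = λ − Σ_i m_i α_i`; dominance of `μ` (for `g_sh`) means `p j (η_λ(μ)) ≥ 0` for
`j ∈ I_sh`, and the conclusion is dominance of `η_λ(μ)` for `g`, i.e.
`p j (η_λ(μ)) ≥ 0` for all `j`. -/
theorem eta_lambda_dominant
    {I : Type} [Fintype I] [DecidableEq I]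
    {V : Type} [AddCommGroup V] [Module ℝ V]
    (α : I → V)                                -- simple roots
    (p : I → V →ₗ[ℝ] ℝ)                        -- evaluation at simple coroots h_j
    (hcartan : ∀ i j : I, i ≠ j → p j (α i) ≤ 0)
    (Ish : Set I)                               -- indices of short simple roots
    (lam : V)                                   -- the dominant weight λ
    (hlam : ∀ j : I, 0 ≤ p j lam)
    (m : I → ℕ) (hm : ∀ i : I, i ∉ Ish → m i = 0)   -- μ = λ̄ − Σ_{i∈I_sh} m_i ᾱ_i ≤ λ̄
    (hμdom : ∀ j ∈ Ish, 0 ≤ p j (lam - ∑ i : I, (m i : ℝ) • α i)) :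
    ∀ j : I, 0 ≤ p j (lam - ∑ i : I, (m i : ℝ) • α i) :=
  eta_lambda_dominant_general α p hcartan Ish lam hlam m hm hμdom
end

section
/- Let a ∈ F and consider the assignment φ_a on divided powers given by φ_a((x^±_{α,r})^{(k)}) = Σ_{k₀+⋯+k_r = k} Π_{s=0}^{r} binom(r,s)^{k_s} (−a)^{k_s(r−s)} (x^±_{α,s})^{(k_s)}. Over a characteristic-zero field, the algebra automorphism of U(g[t]) induced by the Lie algebra automorphism x ⊗ t ↦ x ⊗ (t − a) acts on divided powers by exactly this formula, and in particular preserves the integral form U_ℤ(g[t]) when a ∈ ℤ. -/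
/-!
The `X r` commute, so they may be treated as elements of a commutative algebra, where divided
powers satisfy the multinomial theorem without multinomial coefficients:
`(∑ c_s y_s)^(k) = ∑_{|f| = k} ∏ c_s^{f_s} y_s^(f_s)`. Applied to
`φ(X r) = ∑ binom(r,s) (-a)^(r-s) X s` this is the formula for `φ` on divided powers. For
`a ∈ ℤ` all its coefficients are integers, so `φ` sends every generator of the integral form into
the integral form, hence preserves it.
-/

section DividedPowers

open Finset Nat

variable {K : Type*} [Field K] [CharZero K]

theorem inv_factorial_smul_sum_pow {A ι : Type*} [CommRing A] [Algebra K A] [Fintype ι]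
    [DecidableEq ι] (y : ι → A) (k : ℕ) :
    (k ! : K)⁻¹ • (∑ i, y i) ^ k =
      ∑ f ∈ univ.piAntidiag k, ∏ i, ((f i)! : K)⁻¹ • y i ^ f i := by
  rw [sum_pow_eq_sum_piAntidiag, smul_sum]
  refine sum_congr rfl fun f hf => ?_
  have hspec : (∏ i, ((f i)! : K)) * multinomial univ f = k ! := by
    exact_mod_cast (mem_piAntidiag.1 hf).1 ▸ multinomial_spec univ f
  rw [prod_smul, ← nsmul_eq_mul, ← Nat.cast_smul_eq_nsmul K, smul_smul, prod_inv_distrib,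
    ← hspec, mul_inv, mul_assoc, inv_mul_cancel₀ (cast_ne_zero.2 (multinomial_pos univ f).ne'),
    mul_one]

theorem inv_factorial_smul_sum_smul_pow {A : Type*} [CommRing A] [Algebra K A] {n : ℕ}
    (c : Fin n → K) (y : Fin n → A) (k : ℕ) :
    (k ! : K)⁻¹ • (∑ i, c i • y i) ^ k =
      ∑ f ∈ Nat.antidiagonalTuple n k, (∏ i, c i ^ f i) •
        ((List.finRange n).map fun i => ((f i)! : K)⁻¹ • y i ^ f i).prod := by
  rw [inv_factorial_smul_sum_pow, piAntidiag_univ_fin_eq_antidiagonalTuple]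
  refine sum_congr rfl fun f _ => ?_
  simp only [smul_pow, smul_comm _ (c _ ^ _), prod_smul, ← Fin.prod_univ_def]

open scoped IsMulCommutative in
theorem inv_factorial_smul_sum_smul_pow_of_commute {U : Type*} [Ring U] [Algebra K U] {n : ℕ}
    (c : Fin n → K) (y : Fin n → U) (hy : ∀ i j, Commute (y i) (y j)) (k : ℕ) :
    (k ! : K)⁻¹ • (∑ i, c i • y i) ^ k =
      ∑ f ∈ Nat.antidiagonalTuple n k, (∏ i, c i ^ f i) •
        ((List.finRange n).map fun i => ((f i)! : K)⁻¹ • y i ^ f i).prod := by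
  let B := Algebra.adjoin K (Set.range y)
  have : IsMulCommutative B := Algebra.isMulCommutative_adjoin K <| by
    rintro _ ⟨i, rfl⟩ _ ⟨j, rfl⟩
    exact hy i j
  let z : Fin n → B := fun i => ⟨y i, Algebra.subset_adjoin ⟨i, rfl⟩⟩
  simpa [z, map_list_prod, Function.comp_def] using
    congrArg B.val (inv_factorial_smul_sum_smul_pow c z k)

end DividedPowers

theorem Subring.map_mem_closure_of_forall_mem {R : Type*} [Ring R] (φ : R →+* R) {s : Set R}
    (h : ∀ x ∈ s, φ x ∈ closure s) {u : R} (hu : u ∈ closure s) : φ u ∈ closure s :=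
  (closure_le (t := (closure s).comap φ)).2 h hu

theorem AlgHom.map_inv_factorial_smul_pow_of_map_eq_sum_choose {K U : Type*} [Field K]
    [CharZero K] [Ring U] [Algebra K U] (a : K) (X : ℕ → U)
    (hcomm : ∀ r s : ℕ, X r * X s = X s * X r) (φ : U →ₐ[K] U)
    (hφ : ∀ r : ℕ, φ (X r) =
      ∑ s ∈ Finset.range (r + 1), ((r.choose s : K) * (-a) ^ (r - s)) • X s) (r k : ℕ) :
    φ ((k.factorial : K)⁻¹ • X r ^ k) =
      ∑ f ∈ Finset.Nat.antidiagonalTuple (r + 1) k,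
        (∏ s : Fin (r + 1), ((r.choose s : K) ^ f s * (-a) ^ (f s * (r - s)))) •
          ((List.finRange (r + 1)).map
            fun s => ((f s).factorial : K)⁻¹ • X s ^ f s).prod := by
  rw [map_smul, map_pow, hφ, ← Fin.sum_univ_eq_sum_range (fun s => _ • X s),
    inv_factorial_smul_sum_smul_pow_of_commute _ _ fun i j => hcomm i j]
  refine Finset.sum_congr rfl fun f _ => congrArg (· • _) (Finset.prod_congr rfl fun s _ => ?_)
  rw [mul_pow, ← pow_mul, mul_comm (r - _)]

/-- over a field `K` of characteristic zero, let `φ` be the algebra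
automorphism of `U(g[t])` induced by the Lie algebra automorphism
`x ⊗ t ↦ x ⊗ (t − a)`; on first powers it acts by
`φ(x ⊗ t^r) = Σ_{s≤r} binom(r,s)(−a)^{r−s} x ⊗ t^s` (taken as a hypothesis on the
pairwise-commuting elements `X r = x^±_{α,r}`).  Then on divided powers `φ` acts by
exactly the formula
`φ((x^±_{α,r})^{(k)}) = Σ_{k₀+⋯+k_r=k} Π_{s=0}^r binom(r,s)^{k_s} (−a)^{k_s(r−s)}
(x^±_{α,s})^{(k_s)}`, and in particular `φ` preserves the integral form (the subring
generated by the divided powers) when `a ∈ ℤ`. -/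
theorem phi_a_on_divided_powers
    (K : Type) [Field K] [CharZero K]
    (U : Type) [Ring U] [Algebra K U]
    (a : K) (X : ℕ → U)
    (hcomm : ∀ r s : ℕ, X r * X s = X s * X r)
    (φ : U →ₐ[K] U)
    (hφ : ∀ r : ℕ, φ (X r) =
      ∑ s ∈ Finset.range (r + 1), ((r.choose s : K) * (-a) ^ (r - s)) • X s) :
    (∀ r k : ℕ,
      φ ((↑(k.factorial) : K)⁻¹ • X r ^ k) =
        ∑ f ∈ Finset.Nat.antidiagonalTuple (r + 1) k,
          (∏ s : Fin (r + 1),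
            ((r.choose (s : ℕ) : K) ^ (f s) * (-a) ^ (f s * (r - (s : ℕ))))) •
          ((List.finRange (r + 1)).map
            (fun s => ((↑((f s).factorial) : K)⁻¹ • X (s : ℕ) ^ (f s)))).prod) ∧
    (∀ n : ℤ, a = (n : K) →
      ∀ u ∈ Subring.closure {y : U | ∃ r k : ℕ, y = (↑(k.factorial) : K)⁻¹ • X r ^ k},
        φ u ∈ Subring.closure {y : U | ∃ r k : ℕ, y = (↑(k.factorial) : K)⁻¹ • X r ^ k}) := by
  have hdiv := φ.map_inv_factorial_smul_pow_of_map_eq_sum_choose a X hcomm hφ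
  refine ⟨hdiv, fun n hn u hu => Subring.map_mem_closure_of_forall_mem (φ : U →+* U) ?_ hu⟩
  rintro _ ⟨r, k, rfl⟩
  change φ _ ∈ _
  rw [hdiv]
  refine Subring.sum_mem _ fun f _ => ?_
  have hcoeff : ∏ s : Fin (r + 1), ((r.choose s : K) ^ f s * (-a) ^ (f s * (r - s))) =
      ((∏ s : Fin (r + 1), ((r.choose s : ℤ) ^ f s * (-n) ^ (f s * (r - s))) : ℤ) : K) := by
    push_cast [hn]
    rfl
  rw [hcoeff, Int.cast_smul_eq_zsmul]
  refine Subring.zsmul_mem _ (Subring.list_prod_mem _ fun x hx => ?_) _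
  obtain ⟨s, -, rfl⟩ := List.mem_map.1 hx
  exact Subring.subset_closure ⟨s, f s, rfl⟩
end
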